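/- Fix n ≥ 3 and M > 0 satisfying (2/n)(−M² + M + n − 2) + ((n−2)/n)(2M + n − 4) < 0 and 2M − (n−2) > 0. In the environment where agents 1, 2 have values uniform on {M, −M²} and agents 3,...,n have values uniform on {1, −1}, conditional on exactly n−1 agents having positive values (uniform over which agent is negative), the conditional expected sum of values is negative; consequently the unanimity rule f^(n) yields strictly higher expected welfare than any other qualified majority rule f^(k) with 1 ≤ k ≤ n−1. -/
import Mathlib


open Finset

/-- Value profiles: each agent reports an element of the finite value set `V`. -/
abbrev Pt (V : Finset ℝ) := {x : ℝ // x ∈ V}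

/-- Expectation of `h` under independent value distributions `G i` on `V`. -/
noncomputable def expect {n : ℕ} (V : Finset ℝ) (G : Fin n → ℝ → ℝ)
    (h : (Fin n → ℝ) → ℝ) : ℝ :=
  ∑ w : Fin n → Pt V, (∏ i, G i (w i)) * h (fun i => (w i : ℝ))

/-- Interim expectation `E[f(v_i, ṽ₋ᵢ)]` when agent `i` reports `x`. -/
noncomputable def interim {n : ℕ} (V : Finset ℝ) (G : Fin n → ℝ → ℝ)
    (f : (Fin n → ℝ) → ℝ) (i : Fin n) (x : ℝ) : ℝ :=
  expect V G (fun v => f (Function.update v i x))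

/-- Bayesian incentive compatibility. -/
def BIC {n : ℕ} (V : Finset ℝ) (G : Fin n → ℝ → ℝ) (f : (Fin n → ℝ) → ℝ) : Prop :=
  ∀ i : Fin n, ∀ x ∈ V, ∀ y ∈ V, x * interim V G f i y ≤ x * interim V G f i x

/-- Anonymity: invariance under permutations of the reported values. -/
def Anonymous {n : ℕ} (f : (Fin n → ℝ) → ℝ) : Prop :=
  ∀ (π : Equiv.Perm (Fin n)) (v : Fin n → ℝ), f (fun i => v (π i)) = f v

/-- Expected utilitarian welfare. -/
noncomputable def welfare {n : ℕ} (V : Finset ℝ) (G : Fin n → ℝ → ℝ)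
    (f : (Fin n → ℝ) → ℝ) : ℝ :=
  expect V G (fun v => f v * ∑ i, v i)

/-- `g` is a probability distribution on `V`. -/
def IsDistrib (V : Finset ℝ) (g : ℝ → ℝ) : Prop :=
  (∀ x, 0 ≤ g x) ∧ ∑ x ∈ V, g x = 1

/-- `g` puts positive mass on at least one positive and one negative value of `V`. -/
def PosNegMass (V : Finset ℝ) (g : ℝ → ℝ) : Prop :=
  (∃ x ∈ V, 0 < x ∧ 0 < g x) ∧ (∃ x ∈ V, x < 0 ∧ 0 < g x)

/-- The SCF takes values in `[0,1]`. -/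
def InRange01 {n : ℕ} (f : (Fin n → ℝ) → ℝ) : Prop := ∀ v, 0 ≤ f v ∧ f v ≤ 1

/-- Number of agents preferring the reform. -/
noncomputable def posCount {n : ℕ} (v : Fin n → ℝ) : ℕ := (Finset.univ.filter fun i => 0 < v i).card

/-- Qualified majority rule with threshold `k`. -/
noncomputable def qmr {n : ℕ} (k : ℕ) (v : Fin n → ℝ) : ℝ :=
  if k ≤ posCount v then 1 else 0

/-- The value set `V = {-M², -1, 1, M}`. -/
noncomputable def VM (M : ℝ) : Finset ℝ := {-M^2, -1, 1, M}

/-- Agents 1, 2 are uniform on `{M, -M²}`; agents 3,…,n are uniform on `{1, -1}`. -/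
noncomputable def GM (n : ℕ) (M : ℝ) : Fin n → ℝ → ℝ := fun i x =>
  if (i : ℕ) < 2 then (if x = M ∨ x = -M^2 then 1/2 else 0)
  else (if x = 1 ∨ x = -1 then 1/2 else 0)

noncomputable def av (n : ℕ) (M : ℝ) : Fin n → ℝ := fun i => if (i:ℕ) < 2 then M else 1
noncomputable def bv (n : ℕ) (M : ℝ) : Fin n → ℝ := fun i => if (i:ℕ) < 2 then -M^2 else -1

lemma av_mem (n : ℕ) (M : ℝ) (i : Fin n) : av n M i ∈ VM M := by
  unfold av VM; split <;> simp

lemma bv_mem (n : ℕ) (M : ℝ) (i : Fin n) : bv n M i ∈ VM M := by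
  unfold bv VM; split <;> simp

lemma av_pos {n : ℕ} {M : ℝ} (hM : 0 < M) (i : Fin n) : 0 < av n M i := by
  unfold av; split <;> norm_num; exact hM

lemma bv_neg {n : ℕ} {M : ℝ} (hM : 0 < M) (i : Fin n) : bv n M i < 0 := by
  unfold bv; split <;> nlinarith

lemma G_av {n : ℕ} {M : ℝ} (hM : 0 < M) (i : Fin n) : GM n M i (av n M i) = 1/2 := by
  by_cases h : (i:ℕ) < 2 <;> simp [GM, av, h]

lemma G_bv {n : ℕ} {M : ℝ} (hM : 0 < M) (i : Fin n) : GM n M i (bv n M i) = 1/2 := by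
  by_cases h : (i:ℕ) < 2 <;> simp [GM, bv, h]

lemma G_zero {n : ℕ} {M : ℝ} (hM : 1 < M) (i : Fin n) (x : ℝ) (hx : x ∈ VM M)
    (hxa : x ≠ av n M i) (hxb : x ≠ bv n M i) : GM n M i x = 0 := by
  simp only [VM, Finset.mem_insert, Finset.mem_singleton] at hx
  by_cases h : (i:ℕ) < 2 <;>
    simp only [GM, av, bv, h, if_true, if_false] at hxa hxb ⊢ <;>
    rcases hx with rfl | rfl | rfl | rfl <;>
    simp_all <;>
    constructor <;> nlinarith

lemma expect_eq {n : ℕ} {M : ℝ} (hM : 1 < M) (h : (Fin n → ℝ) → ℝ) :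
    expect (VM M) (GM n M) h
      = (1/2)^n * ∑ S : Finset (Fin n),
          h (fun i => if i ∈ S then av n M i else bv n M i) := by
  classical
  have hM0 : 0 < M := by linarith
  set e : Finset (Fin n) → (Fin n → Pt (VM M)) :=
    fun S i => if i ∈ S then ⟨av n M i, av_mem n M i⟩ else ⟨bv n M i, bv_mem n M i⟩ with he
  have hcoe : ∀ S i, ((e S i : ℝ)) = if i ∈ S then av n M i else bv n M i := by
    intro S i; simp only [he]; split <;> rfl
  have hne : ∀ i : Fin n, av n M i ≠ bv n M i := by
    intro i; have := av_pos hM0 i; have := bv_neg hM0 i; linarith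
  have hinj : Function.Injective e := by
    intro S T hST
    ext i
    have := congrArg (fun w => (w i : ℝ)) hST
    simp only [hcoe] at this
    by_cases hS : i ∈ S <;> by_cases hT : i ∈ T <;> simp [hS, hT] at this ⊢
    · exact hne i this
    · exact hne i this.symm
  have hzero : ∀ w ∈ (Finset.univ : Finset (Fin n → Pt (VM M))),
      w ∉ Finset.image e Finset.univ →
      (∏ i, GM n M i (w i)) * h (fun i => (w i : ℝ)) = 0 := by
    intro w _ hw
    have : ∃ i, (w i : ℝ) ≠ av n M i ∧ (w i : ℝ) ≠ bv n M i := by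
      by_contra hc
      push_neg at hc
      apply hw
      refine Finset.mem_image.2 ⟨Finset.univ.filter (fun i => (w i : ℝ) = av n M i),
        Finset.mem_univ _, ?_⟩
      funext i
      by_cases hai : (w i : ℝ) = av n M i
      · have hiS : i ∈ Finset.univ.filter (fun i => (w i : ℝ) = av n M i) := by
          simp [hai]
        simp only [he, if_pos hiS]
        exact (Subtype.ext hai).symm
      · have hbi := hc i hai
        have hiS : i ∉ Finset.univ.filter (fun i => (w i : ℝ) = av n M i) := by
          simp [hai]
        simp only [he, if_neg hiS]
        exact (Subtype.ext hbi).symm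
    obtain ⟨i, hia, hib⟩ := this
    have : GM n M i (w i) = 0 := G_zero hM i _ (w i).2 hia hib
    rw [Finset.prod_eq_zero (Finset.mem_univ i) this, zero_mul]
  unfold _root_.expect
  rw [← Finset.sum_subset (Finset.subset_univ (Finset.image e Finset.univ)) hzero]
  rw [Finset.sum_image (fun a _ b _ hab => hinj hab)]
  rw [Finset.mul_sum]
  refine Finset.sum_congr rfl fun S _ => ?_
  have h1 : (∏ i, GM n M i (e S i)) = (1/2)^n := by
    calc (∏ i, GM n M i (e S i)) = ∏ i : Fin n, (1/2 : ℝ) := by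
          refine Finset.prod_congr rfl fun i _ => ?_
          rw [hcoe]
          by_cases hiS : i ∈ S
          · rw [if_pos hiS]; exact G_av hM0 i
          · rw [if_neg hiS]; exact G_bv hM0 i
      _ = (1/2)^n := by simp
  rw [h1]
  exact congrArg (fun z => (1/2:ℝ)^n * z) (congrArg h (funext fun i => hcoe S i))

lemma F_eq {n : ℕ} (M : ℝ) (hn : 1 ≤ n) (φ : ℕ → ℝ) :
    ∑ S : Finset (Fin n), φ S.card * (∑ i, if i ∈ S then av n M i else bv n M i)
    = (∑ i, av n M i) * (∑ j ∈ range n, ((n-1).choose j : ℝ) * φ (j+1))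
      + (∑ i, bv n M i) * (∑ j ∈ range n, ((n-1).choose j : ℝ) * φ j) := by
  classical
  have key : ∀ i : Fin n,
      (∑ S : Finset (Fin n), φ S.card * (if i ∈ S then av n M i else bv n M i))
      = av n M i * (∑ j ∈ range n, ((n-1).choose j : ℝ) * φ (j+1))
        + bv n M i * (∑ j ∈ range n, ((n-1).choose j : ℝ) * φ j) := by
    intro i
    set t := Finset.univ.erase i with ht
    have hu : (Finset.univ : Finset (Fin n)) = insert i t :=
      (Finset.insert_erase (Finset.mem_univ i)).symm
    have hcard : t.card = n - 1 := by
      rw [ht, Finset.card_erase_of_mem (Finset.mem_univ i), Finset.card_univ, Fintype.card_fin]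
    have hrange : t.card + 1 = n := by omega
    calc (∑ S : Finset (Fin n), φ S.card * (if i ∈ S then av n M i else bv n M i))
        = ∑ S ∈ (Finset.univ : Finset (Fin n)).powerset,
            φ S.card * (if i ∈ S then av n M i else bv n M i) := by
          rw [Finset.powerset_univ]
      _ = (∑ T ∈ t.powerset,
            φ T.card * (if i ∈ T then av n M i else bv n M i))
          + ∑ T ∈ t.powerset,
            φ (insert i T).card * (if i ∈ insert i T then av n M i else bv n M i) := by
          rw [hu, Finset.sum_powerset_insert (show i ∉ t from Finset.notMem_erase i Finset.univ)]
      _ = (∑ T ∈ t.powerset, φ T.card * bv n M i)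
          + ∑ T ∈ t.powerset, φ (T.card + 1) * av n M i := by
          congr 1
          · refine Finset.sum_congr rfl fun T hT => ?_
            have : i ∉ T := fun hiT =>
              Finset.notMem_erase i Finset.univ (ht ▸ (Finset.mem_powerset.1 hT) hiT)
            rw [if_neg this]
          · refine Finset.sum_congr rfl fun T hT => ?_
            have hiT : i ∉ T := fun hiT =>
              Finset.notMem_erase i Finset.univ (ht ▸ (Finset.mem_powerset.1 hT) hiT)
            rw [if_pos (Finset.mem_insert_self i T), Finset.card_insert_of_notMem hiT]
      _ = av n M i * (∑ j ∈ range n, ((n-1).choose j : ℝ) * φ (j+1))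
          + bv n M i * (∑ j ∈ range n, ((n-1).choose j : ℝ) * φ j) := by
          rw [Finset.sum_powerset_apply_card (fun j => φ j * bv n M i),
            Finset.sum_powerset_apply_card (fun j => φ (j + 1) * av n M i)]
          rw [hrange, hcard]
          rw [Finset.mul_sum, Finset.mul_sum, add_comm]
          congr 1 <;> refine Finset.sum_congr rfl fun j _ => ?_ <;>
            simp only [nsmul_eq_mul] <;> ring
  calc ∑ S : Finset (Fin n), φ S.card * (∑ i, if i ∈ S then av n M i else bv n M i)
      = ∑ S : Finset (Fin n), ∑ i, φ S.card * (if i ∈ S then av n M i else bv n M i) := by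
        simp_rw [Finset.mul_sum]
    _ = ∑ i, ∑ S : Finset (Fin n), φ S.card * (if i ∈ S then av n M i else bv n M i) :=
        Finset.sum_comm
    _ = ∑ i : Fin n, (av n M i * (∑ j ∈ range n, ((n-1).choose j : ℝ) * φ (j+1))
          + bv n M i * (∑ j ∈ range n, ((n-1).choose j : ℝ) * φ j)) :=
        Finset.sum_congr rfl fun i _ => key i
    _ = (∑ i, av n M i) * (∑ j ∈ range n, ((n-1).choose j : ℝ) * φ (j+1))
      + (∑ i, bv n M i) * (∑ j ∈ range n, ((n-1).choose j : ℝ) * φ j) := by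
        rw [Finset.sum_add_distrib, Finset.sum_mul, Finset.sum_mul]

lemma card_lt_two {n : ℕ} (hn : 2 ≤ n) :
    (Finset.univ.filter (fun i : Fin n => (i:ℕ) < 2)).card = 2 := by
  have h : Finset.univ.filter (fun i : Fin n => (i:ℕ) < 2)
      = {(⟨0, by omega⟩ : Fin n), ⟨1, by omega⟩} := by
    ext j
    simp only [Finset.mem_filter, Finset.mem_univ, true_and, Finset.mem_insert,
      Finset.mem_singleton, Fin.ext_iff]
    omega
  rw [h, Finset.card_insert_of_notMem (by simp [Fin.ext_iff]), Finset.card_singleton]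

lemma sum_av {n : ℕ} (M : ℝ) (hn : 2 ≤ n) :
    ∑ i, av n M i = 2*M + ((n:ℝ) - 2) := by
  unfold av
  rw [Finset.sum_ite, Finset.sum_const, Finset.sum_const, card_lt_two hn]
  have h2 : (Finset.univ.filter (fun i : Fin n => ¬ (i:ℕ) < 2)).card = n - 2 := by
    have := Finset.card_filter_add_card_filter_not
      (s := (Finset.univ : Finset (Fin n))) (p := fun i : Fin n => (i:ℕ) < 2)
    rw [card_lt_two hn, Finset.card_univ, Fintype.card_fin] at this
    omega
  rw [h2]
  have : ((n - 2 : ℕ) : ℝ) = (n:ℝ) - 2 := by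
    have : (2:ℕ) ≤ n := hn
    push_cast [Nat.cast_sub this]
    ring
  simp only [nsmul_eq_mul, this, Nat.cast_ofNat]
  ring

lemma sum_bv {n : ℕ} (M : ℝ) (hn : 2 ≤ n) :
    ∑ i, bv n M i = -(2*M^2) - ((n:ℝ) - 2) := by
  unfold bv
  rw [Finset.sum_ite, Finset.sum_const, Finset.sum_const, card_lt_two hn]
  have h2 : (Finset.univ.filter (fun i : Fin n => ¬ (i:ℕ) < 2)).card = n - 2 := by
    have := Finset.card_filter_add_card_filter_not
      (s := (Finset.univ : Finset (Fin n))) (p := fun i : Fin n => (i:ℕ) < 2)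
    rw [card_lt_two hn, Finset.card_univ, Fintype.card_fin] at this
    omega
  rw [h2]
  have : ((n - 2 : ℕ) : ℝ) = (n:ℝ) - 2 := by
    have : (2:ℕ) ≤ n := hn
    push_cast [Nat.cast_sub this]
    ring
  simp only [nsmul_eq_mul, this, Nat.cast_ofNat]
  ring

lemma posCount_eq {n : ℕ} {M : ℝ} (hM : 0 < M) (S : Finset (Fin n)) :
    posCount (fun i => if i ∈ S then av n M i else bv n M i) = S.card := by
  unfold posCount
  congr 1
  ext i
  simp only [Finset.mem_filter, Finset.mem_univ, true_and]
  by_cases h : i ∈ S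
  · simp only [h, if_true, iff_true]
    exact av_pos hM i
  · simp only [h, if_false, iff_false, not_lt]
    exact le_of_lt (bv_neg hM i)

lemma choose_le_mul (m r : ℕ) (h : r + 1 ≤ m) : m.choose r ≤ m * m.choose (r+1) := by
  have h1 := Nat.choose_succ_right_eq m r
  calc m.choose r ≤ m.choose r * (m - r) :=
        Nat.le_mul_of_pos_right _ (by omega)
    _ = m.choose (r+1) * (r+1) := h1.symm
    _ ≤ m.choose (r+1) * m := Nat.mul_le_mul_left _ h
    _ = m * m.choose (r+1) := Nat.mul_comm _ _

set_option maxHeartbeats 1600000 in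
/-- under the two displayed inequalities on `M` and `n`, conditional
on exactly `n-1` agents having positive values the expected total value is negative,
and the unanimity rule strictly welfare-dominates every other qualified majority rule. -/
theorem stmt14 (n : ℕ) (M : ℝ) (hn : 3 ≤ n) (hM : 0 < M)
    (h1 : (2 / (n : ℝ)) * (-M^2 + M + ((n : ℝ) - 2)) +
      (((n : ℝ) - 2) / (n : ℝ)) * (2*M + ((n : ℝ) - 4)) < 0)
    (h2 : 0 < 2*M - ((n : ℝ) - 2)) :
    expect (VM M) (GM n M)
      (fun v => (if posCount v = n - 1 then 1 else 0) * ∑ i, v i) < 0 ∧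
    (∀ k : ℕ, 1 ≤ k → k ≤ n - 1 →
      welfare (VM M) (GM n M) (qmr (n := n) k) <
        welfare (VM M) (GM n M) (qmr (n := n) n)) := by
  classical
  obtain ⟨p, rfl⟩ : ∃ p, n = p + 3 := ⟨n - 3, by omega⟩
  have hp0 : (0:ℝ) ≤ (p:ℝ) := Nat.cast_nonneg p
  push_cast at h1 h2
  have hp3 : ((p:ℝ) + 3) ≠ 0 := by positivity
  have key : ((p:ℝ)+2) * (2*M + ((p:ℝ)+1)) + (-(2*M^2) - ((p:ℝ)+1)) < 0 := by
    have h3 : (0:ℝ) < (p:ℝ) + 3 := by positivity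
    have := mul_lt_mul_of_pos_left h1 h3
    rw [mul_zero] at this
    field_simp at this
    nlinarith [this]
  have hM1 : 1 < M := by nlinarith [key, hp0]
  have hM0 : (0:ℝ) < M := hM
  have hsub1 : p + 3 - 1 = p + 2 := by omega
  have hsub2 : p + 3 - 1 = p + 2 := hsub1
  have hA : ∑ i, av (p+3) M i = 2*M + ((p:ℝ)+1) := by
    rw [sum_av M (by omega)]; push_cast; ring
  have hB : ∑ i, bv (p+3) M i = -(2*M^2) - ((p:ℝ)+1) := by
    rw [sum_bv M (by omega)]; push_cast; ring
  have hApos : (0:ℝ) < 2*M + ((p:ℝ)+1) := by nlinarith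
  constructor
  · rw [expect_eq hM1]
    have hrw : ∀ S : Finset (Fin (p+3)),
        (if posCount (fun i => if i ∈ S then av (p+3) M i else bv (p+3) M i) = p + 3 - 1
          then (1:ℝ) else 0) * (∑ i, if i ∈ S then av (p+3) M i else bv (p+3) M i)
        = (fun j => if j = p + 2 then (1:ℝ) else 0) S.card
            * (∑ i, if i ∈ S then av (p+3) M i else bv (p+3) M i) := by
      intro S
      rw [posCount_eq hM0, hsub1]
    rw [Finset.sum_congr rfl fun S _ => hrw S]
    rw [F_eq M (by omega) (fun j => if j = p + 2 then (1:ℝ) else 0), hA, hB, hsub1]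
    have e1 : (∑ j ∈ range (p+3), ((p+2).choose j : ℝ)
        * (if j + 1 = p + 2 then (1:ℝ) else 0)) = (p:ℝ) + 2 := by
      have : ∀ j ∈ range (p+3), ((p+2).choose j : ℝ) * (if j + 1 = p + 2 then (1:ℝ) else 0)
          = if j = p + 1 then ((p+2).choose j : ℝ) else 0 := by
        intro j _
        by_cases hj : j = p + 1
        · subst hj; simp
        · have : ¬(j + 1 = p + 2) := by omega
          simp [hj, this]
      rw [Finset.sum_congr rfl this, Finset.sum_ite_eq' (range (p+3)) (p+1)]
      rw [if_pos (by rw [Finset.mem_range]; omega)]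
      rw [Nat.choose_succ_self_right]
      push_cast; ring
    have e0 : (∑ j ∈ range (p+3), ((p+2).choose j : ℝ)
        * (if j = p + 2 then (1:ℝ) else 0)) = 1 := by
      have : ∀ j ∈ range (p+3), ((p+2).choose j : ℝ) * (if j = p + 2 then (1:ℝ) else 0)
          = if j = p + 2 then ((p+2).choose j : ℝ) else 0 := by
        intro j _
        by_cases hj : j = p + 2 <;> simp [hj]
      rw [Finset.sum_congr rfl this, Finset.sum_ite_eq' (range (p+3)) (p+2)]
      rw [if_pos (by simp)]
      simp
    rw [e1, e0]
    have : (0:ℝ) < (1/2:ℝ)^(p+3) := by positivity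
    nlinarith [key, this]
  · intro k hk1 hk2
    rw [hsub1] at hk2
    obtain ⟨l, rfl⟩ : ∃ l, k = l + 1 := ⟨k - 1, by omega⟩
    have hl : l ≤ p + 1 := by omega
    unfold welfare
    rw [expect_eq hM1, expect_eq hM1]
    have hrw : ∀ m : ℕ, ∀ S : Finset (Fin (p+3)),
        qmr m (fun i => if i ∈ S then av (p+3) M i else bv (p+3) M i)
          * (∑ i, if i ∈ S then av (p+3) M i else bv (p+3) M i)
        = (fun j => if m ≤ j then (1:ℝ) else 0) S.card
            * (∑ i, if i ∈ S then av (p+3) M i else bv (p+3) M i) := by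
      intro m S
      unfold qmr
      rw [posCount_eq hM0]
    rw [Finset.sum_congr rfl fun S _ => hrw (l+1) S,
      Finset.sum_congr rfl fun S _ => hrw (p+3) S]
    rw [F_eq M (by omega) (fun j => if l + 1 ≤ j then (1:ℝ) else 0),
      F_eq M (by omega) (fun j => if p + 3 ≤ j then (1:ℝ) else 0), hA, hB, hsub1]
    apply mul_lt_mul_of_pos_left _ (show (0:ℝ) < (1/2:ℝ)^(p+3) by positivity)
    -- right side sums
    have r1 : (∑ j ∈ range (p+3), ((p+2).choose j : ℝ)
        * (if p + 3 ≤ j + 1 then (1:ℝ) else 0)) = 1 := by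
      have : ∀ j ∈ range (p+3), ((p+2).choose j : ℝ) * (if p + 3 ≤ j + 1 then (1:ℝ) else 0)
          = if j = p + 2 then ((p+2).choose j : ℝ) else 0 := by
        intro j hj
        rw [Finset.mem_range] at hj
        by_cases h : j = p + 2
        · subst h; simp
        · have : ¬(p + 3 ≤ j + 1) := by omega
          simp [h, this]
      rw [Finset.sum_congr rfl this, Finset.sum_ite_eq' (range (p+3)) (p+2),
        if_pos (by simp)]
      simp
    have r0 : (∑ j ∈ range (p+3), ((p+2).choose j : ℝ)
        * (if p + 3 ≤ j then (1:ℝ) else 0)) = 0 := by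
      apply Finset.sum_eq_zero
      intro j hj
      rw [Finset.mem_range] at hj
      have : ¬(p + 3 ≤ j) := by omega
      simp [this]
    rw [r1, r0, mul_one, mul_zero, add_zero]
    -- left side sums
    have l1 : (∑ j ∈ range (p+3), ((p+2).choose j : ℝ)
        * (if l + 1 ≤ j + 1 then (1:ℝ) else 0))
        = (∑ j ∈ Finset.Ico l (p+2), ((p+2).choose j : ℝ)) + 1 := by
      have step : ∀ j ∈ range (p+3), ((p+2).choose j : ℝ) * (if l + 1 ≤ j + 1 then (1:ℝ) else 0)
          = if l ≤ j then ((p+2).choose j : ℝ) else 0 := by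
        intro j _
        by_cases h : l ≤ j
        · rw [if_pos h, if_pos (by omega), mul_one]
        · rw [if_neg h, if_neg (by omega), mul_zero]
      rw [Finset.sum_congr rfl step, ← Finset.sum_filter]
      have : (range (p+3)).filter (fun j => l ≤ j) = Finset.Ico l (p+3) := by
        ext j
        simp only [Finset.mem_filter, Finset.mem_range, Finset.mem_Ico]
        omega
      rw [this, Finset.sum_Ico_succ_top (show l ≤ p + 2 by omega), Nat.choose_self]
      norm_num
    have l0 : (∑ j ∈ range (p+3), ((p+2).choose j : ℝ)
        * (if l + 1 ≤ j then (1:ℝ) else 0))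
        = ∑ j ∈ Finset.Ico (l+1) (p+3), ((p+2).choose j : ℝ) := by
      have step : ∀ j ∈ range (p+3), ((p+2).choose j : ℝ) * (if l + 1 ≤ j then (1:ℝ) else 0)
          = if l + 1 ≤ j then ((p+2).choose j : ℝ) else 0 := by
        intro j _
        by_cases h : l + 1 ≤ j <;> simp [h]
      rw [Finset.sum_congr rfl step, ← Finset.sum_filter]
      congr 1
      ext j
      simp only [Finset.mem_filter, Finset.mem_range, Finset.mem_Ico]
      omega
    rw [l1, l0]
    -- core inequality
    have hX : (∑ j ∈ Finset.Ico l (p+2), ((p+2).choose j : ℝ))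
        = ∑ i ∈ range (p+2-l), ((p+2).choose (l+i) : ℝ) := by
      rw [Finset.sum_Ico_eq_sum_range]
    have hY : (∑ j ∈ Finset.Ico (l+1) (p+3), ((p+2).choose j : ℝ))
        = ∑ i ∈ range (p+2-l), ((p+2).choose (l+1+i) : ℝ) := by
      rw [Finset.sum_Ico_eq_sum_range, show p+3-(l+1) = p+2-l from by omega]
    set A := 2*M + ((p:ℝ)+1) with hAdef
    set B := -(2*M^2) - ((p:ℝ)+1) with hBdef
    have core : A * (∑ j ∈ Finset.Ico l (p+2), ((p+2).choose j : ℝ))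
        + B * (∑ j ∈ Finset.Ico (l+1) (p+3), ((p+2).choose j : ℝ)) < 0 := by
      rw [hX, hY, Finset.mul_sum, Finset.mul_sum, ← Finset.sum_add_distrib]
      have bound : ∀ i ∈ range (p+2-l),
          A * ((p+2).choose (l+i) : ℝ) + B * ((p+2).choose (l+1+i) : ℝ)
          ≤ (((p:ℝ)+2) * A + B) * ((p+2).choose (l+1+i) : ℝ) := by
        intro i hi
        rw [Finset.mem_range] at hi
        have hch : (p+2).choose (l+i) ≤ (p+2) * (p+2).choose (l+i+1) :=
          choose_le_mul (p+2) (l+i) (by omega)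
        have hidx : l + 1 + i = l + i + 1 := by omega
        rw [hidx]
        have hchR : ((p+2).choose (l+i) : ℝ) ≤ ((p:ℝ)+2) * ((p+2).choose (l+i+1) : ℝ) := by
          have := hch
          exact_mod_cast by exact_mod_cast Nat.cast_le.mpr this
        have hCnn : (0:ℝ) ≤ ((p+2).choose (l+i+1) : ℝ) := Nat.cast_nonneg _
        nlinarith [hApos, hchR, hCnn]
      calc (∑ i ∈ range (p+2-l), (A * ((p+2).choose (l+i) : ℝ)
              + B * ((p+2).choose (l+1+i) : ℝ)))
          ≤ ∑ i ∈ range (p+2-l), (((p:ℝ)+2) * A + B) * ((p+2).choose (l+1+i) : ℝ) :=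
            Finset.sum_le_sum bound
        _ = (((p:ℝ)+2) * A + B) * ∑ i ∈ range (p+2-l), ((p+2).choose (l+1+i) : ℝ) := by
            rw [Finset.mul_sum]
        _ ≤ (((p:ℝ)+2) * A + B) * 1 := by
            have hQ : (1:ℝ) ≤ ∑ i ∈ range (p+2-l), ((p+2).choose (l+1+i) : ℝ) := by
              have hmem : p + 1 - l ∈ range (p+2-l) := by
                rw [Finset.mem_range]; omega
              have hval : ((p+2).choose (l+1+(p+1-l)) : ℝ) = 1 := by
                have : l + 1 + (p+1-l) = p + 2 := by omega
                rw [this, Nat.choose_self, Nat.cast_one]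
              calc (1:ℝ) = ((p+2).choose (l+1+(p+1-l)) : ℝ) := hval.symm
                _ ≤ _ := Finset.single_le_sum
                  (f := fun i => ((p+2).choose (l+1+i) : ℝ))
                  (fun i _ => Nat.cast_nonneg _) hmem
            have hneg : ((p:ℝ)+2) * A + B ≤ 0 := le_of_lt key
            nlinarith [hneg, hQ]
        _ = ((p:ℝ)+2) * A + B := mul_one _
        _ < 0 := key
    have expand : A * ((∑ j ∈ Finset.Ico l (p+2), ((p+2).choose j : ℝ)) + 1)
        + B * (∑ j ∈ Finset.Ico (l+1) (p+3), ((p+2).choose j : ℝ))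
        = (A * (∑ j ∈ Finset.Ico l (p+2), ((p+2).choose j : ℝ))
          + B * (∑ j ∈ Finset.Ico (l+1) (p+3), ((p+2).choose j : ℝ))) + A := by ring
    rw [expand]
    linarith [core]
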